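/- The set G' of 6×6 real matrices of the block form given by parameters a_i,b_i,c_i,d_i,λ_i,λ'_i,μ_i,μ'_i,κ ∈ ℝ (i=1,2), a_3 ∈ ℝ_{>0}, satisfying a_i d_i − b_i c_i = 1 and [λ_i μ_i] = a_3 [λ'_i μ'_i]·[[a_i,b_i],[c_i,d_i]] for i = 1,2, is a subgroup of GL(6,ℝ): it contains the identity, is closed under matrix multiplication, and is closed under taking inverses. -/

import Mathlib

/-!
With the coordinates ordered `(x₁, x₂, z, y₁, y₂, w)`, a matrix lies in G' iff it is symplectic for
the form pairing `xᵢ` with `yᵢ` and `z` with `w`, it is block triangular both for the ordering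
`z < {x₁, y₁} < {x₂, y₂} < w` and for `z < {x₂, y₂} < {x₁, y₁} < w` (this is exactly the zero pattern
of G'), and its entry `a₃ = g 2 2` is positive. On matrices with that zero pattern the symplectic
equations are precisely `aᵢdᵢ - bᵢcᵢ = 1`, `a₃ · g 5 5 = 1` and `[λᵢ μᵢ] = a₃ [λ'ᵢ μ'ᵢ] Aᵢ`.
Symplectic matrices and block-triangular matrices are each closed under products and inverses, and
since `z` is alone in its block, `g ↦ g 2 2` is multiplicative, so its positivity is preserved too.
-/

open Matrix

/-- Membership in the linear group G' of Theorem 3.1. -/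
def memG' (g : Matrix (Fin 6) (Fin 6) ℝ) : Prop :=
  ∃ a1 b1 c1 d1 a2 b2 c2 d2 a3 l1 l2 l1' l2' m1 m2 m1' m2' k : ℝ,
    0 < a3 ∧ a1 * d1 - b1 * c1 = 1 ∧ a2 * d2 - b2 * c2 = 1 ∧
    -- [λᵢ μᵢ] = a3 [λ'ᵢ μ'ᵢ]·[[aᵢ,bᵢ],[cᵢ,dᵢ]]
    l1 = a3 * (l1' * a1 + m1' * c1) ∧ m1 = a3 * (l1' * b1 + m1' * d1) ∧
    l2 = a3 * (l2' * a2 + m2' * c2) ∧ m2 = a3 * (l2' * b2 + m2' * d2) ∧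
    g = !![a1, 0, 0, b1, 0, m1';
           0, a2, 0, 0, b2, m2';
           l1, l2, a3, m1, m2, k;
           c1, 0, 0, d1, 0, -l1';
           0, c2, 0, 0, d2, -l2';
           0, 0, 0, 0, 0, a3⁻¹]

lemma Matrix.BlockTriangular.mul_apply_self_of_singleton_block {m α R : Type*} [Fintype m]
    [LinearOrder α] [NonUnitalNonAssocSemiring R] {M N : Matrix m m R} {b : m → α}
    (hM : M.BlockTriangular b) (hN : N.BlockTriangular b) {i : m}
    (hi : ∀ k, b k = b i → k = i) : (M * N) i i = M i i * N i i := by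
  refine Finset.sum_eq_single i (fun k _ hki => ?_) (by simp)
  show M i k * N k i = 0
  rcases lt_or_gt_of_ne (mt (hi k) hki) with hlt | hgt
  · rw [hM hlt, zero_mul]
  · rw [hN hgt, mul_zero]

def J6 : Matrix (Fin 6) (Fin 6) ℝ :=
  !![0, 0, 0, -1, 0, 0;
     0, 0, 0, 0, -1, 0;
     0, 0, 0, 0, 0, -1;
     1, 0, 0, 0, 0, 0;
     0, 1, 0, 0, 0, 0;
     0, 0, 1, 0, 0, 0]

/-- Sends index `i < 3` to `Sum.inl i` and `i + 3` to `Sum.inr i`, so that Mathlib's `J (Fin 3) ℝ`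
pairs the coordinates `x₁, x₂, z` (indices `0, 1, 2`) with `y₁, y₂, w` (indices `3, 4, 5`). -/
abbrev toSymplecticCoords :
    Matrix (Fin 6) (Fin 6) ℝ ≃ₐ[ℝ] Matrix (Fin 3 ⊕ Fin 3) (Fin 3 ⊕ Fin 3) ℝ :=
  reindexAlgEquiv ℝ ℝ (finSumFinEquiv (m := 3) (n := 3)).symm

lemma toSymplecticCoords_J6 : toSymplecticCoords J6 = J (Fin 3) ℝ := by
  ext (i | i) (j | j) <;> fin_cases i <;> fin_cases j <;> simp [J6, J, one_apply] <;> rfl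

lemma toSymplecticCoords_transpose (g : Matrix (Fin 6) (Fin 6) ℝ) :
    (toSymplecticCoords g)ᵀ = toSymplecticCoords gᵀ :=
  transpose_reindex _ _ g

lemma toSymplecticCoords_inv (g : Matrix (Fin 6) (Fin 6) ℝ) :
    toSymplecticCoords g⁻¹ = (toSymplecticCoords g)⁻¹ :=
  (inv_reindex _ _ g).symm

def Sp6 : Submonoid (Matrix (Fin 6) (Fin 6) ℝ) :=
  (symplecticGroup (Fin 3) ℝ).comap toSymplecticCoords

lemma mem_Sp6_iff {g : Matrix (Fin 6) (Fin 6) ℝ} : g ∈ Sp6 ↔ gᵀ * J6 * g = J6 := by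
  rw [Sp6, Submonoid.mem_comap, SymplecticGroup.mem_iff',
    ← toSymplecticCoords_J6, toSymplecticCoords_transpose, ← map_mul, ← map_mul,
    toSymplecticCoords.injective.eq_iff]

lemma inv_mem_Sp6 {g : Matrix (Fin 6) (Fin 6) ℝ} (hg : g ∈ Sp6) : g⁻¹ ∈ Sp6 := by
  rw [Sp6, Submonoid.mem_comap, toSymplecticCoords_inv, ← SymplecticGroup.coe_inv' ⟨_, hg⟩]
  exact SetLike.coe_mem _

lemma isUnit_det_of_mem_Sp6 {g : Matrix (Fin 6) (Fin 6) ℝ} (hg : g ∈ Sp6) : IsUnit g.det := by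
  simpa using SymplecticGroup.symplectic_det hg

/-- The symplectic equations force the free entry `f` to be `a3⁻¹`. -/
def shapeG' (a1 b1 c1 d1 a2 b2 c2 d2 a3 l1 l2 l1' l2' m1 m2 m1' m2' k f : ℝ) :
    Matrix (Fin 6) (Fin 6) ℝ :=
  !![a1, 0, 0, b1, 0, m1';
     0, a2, 0, 0, b2, m2';
     l1, l2, a3, m1, m2, k;
     c1, 0, 0, d1, 0, -l1';
     0, c2, 0, 0, d2, -l2';
     0, 0, 0, 0, 0, f]

lemma shapeG'_mem_Sp6_iff {a1 b1 c1 d1 a2 b2 c2 d2 a3 l1 l2 l1' l2' m1 m2 m1' m2' k f : ℝ} :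
    shapeG' a1 b1 c1 d1 a2 b2 c2 d2 a3 l1 l2 l1' l2' m1 m2 m1' m2' k f ∈ Sp6 ↔
      a1 * d1 - b1 * c1 = 1 ∧ a2 * d2 - b2 * c2 = 1 ∧ a3 * f = 1 ∧
      l1 * f = l1' * a1 + m1' * c1 ∧ m1 * f = l1' * b1 + m1' * d1 ∧
      l2 * f = l2' * a2 + m2' * c2 ∧ m2 * f = l2' * b2 + m2' * d2 := by
  rw [mem_Sp6_iff]
  constructor
  · intro h
    have e03 := congrFun₂ h 0 3
    have e14 := congrFun₂ h 1 4
    have e25 := congrFun₂ h 2 5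
    have e05 := congrFun₂ h 0 5
    have e35 := congrFun₂ h 3 5
    have e15 := congrFun₂ h 1 5
    have e45 := congrFun₂ h 4 5
    simp only [shapeG', J6, mul_apply, transpose_apply, of_apply, Fin.sum_univ_six, cons_val',
      cons_val, cons_val_zero, cons_val_one, cons_val_fin_one, Fin.isValue, zero_mul, mul_zero,
      add_zero, zero_add, mul_one, mul_neg, neg_mul, neg_zero, neg_inj, neg_neg]
      at e03 e14 e25 e05 e35 e15 e45
    refine ⟨?_, ?_, e25, ?_, ?_, ?_, ?_⟩ <;> linarith
  · rintro ⟨h1, h2, h3, hl1, hm1, hl2, hm2⟩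
    ext i j
    fin_cases i <;> fin_cases j <;> simp [shapeG', J6, mul_apply, Fin.sum_univ_six] <;> grind

def level₁ : Fin 6 → ℕ := ![1, 2, 0, 1, 2, 3]

def level₂ : Fin 6 → ℕ := ![2, 1, 0, 2, 1, 3]

def HasShapeG' (g : Matrix (Fin 6) (Fin 6) ℝ) : Prop :=
  g.BlockTriangular level₁ ∧ g.BlockTriangular level₂

lemma hasShapeG'_iff {g : Matrix (Fin 6) (Fin 6) ℝ} :
    HasShapeG' g ↔ ∃ a1 b1 c1 d1 a2 b2 c2 d2 a3 l1 l2 l1' l2' m1 m2 m1' m2' k f : ℝ,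
      g = shapeG' a1 b1 c1 d1 a2 b2 c2 d2 a3 l1 l2 l1' l2' m1 m2 m1' m2' k f := by
  constructor
  · rintro ⟨h₁, h₂⟩
    refine ⟨g 0 0, g 0 3, g 3 0, g 3 3, g 1 1, g 1 4, g 4 1, g 4 4, g 2 2, g 2 0, g 2 1,
      -g 3 5, -g 4 5, g 2 3, g 2 4, g 0 5, g 1 5, g 2 5, g 5 5, ?_⟩
    ext i j
    fin_cases i <;> fin_cases j <;> first
      | rfl | exact (neg_neg _).symm | exact h₁ (by decide) | exact h₂ (by decide)
  · rintro ⟨a1, b1, c1, d1, a2, b2, c2, d2, a3, l1, l2, l1', l2', m1, m2, m1', m2', k, f, rfl⟩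
    constructor <;> intro i j hij <;> fin_cases i <;> fin_cases j <;> first
      | rfl | exact absurd hij (by decide)

lemma HasShapeG'.mul {g h : Matrix (Fin 6) (Fin 6) ℝ} (hg : HasShapeG' g) (hh : HasShapeG' h) :
    HasShapeG' (g * h) :=
  ⟨hg.1.mul hh.1, hg.2.mul hh.2⟩

lemma HasShapeG'.inv {g : Matrix (Fin 6) (Fin 6) ℝ} [Invertible g] (hg : HasShapeG' g) :
    HasShapeG' g⁻¹ :=
  ⟨blockTriangular_inv_of_blockTriangular hg.1, blockTriangular_inv_of_blockTriangular hg.2⟩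

lemma HasShapeG'.mul_apply_two_two {g h : Matrix (Fin 6) (Fin 6) ℝ} (hg : HasShapeG' g)
    (hh : HasShapeG' h) : (g * h) 2 2 = g 2 2 * h 2 2 :=
  hg.1.mul_apply_self_of_singleton_block hh.1 (by decide)

lemma memG'_iff {g : Matrix (Fin 6) (Fin 6) ℝ} : memG' g ↔ g ∈ Sp6 ∧ HasShapeG' g ∧ 0 < g 2 2 := by
  constructor
  · rintro ⟨a1, b1, c1, d1, a2, b2, c2, d2, a3, l1, l2, l1', l2', m1, m2, m1', m2', k,
      ha3, h1, h2, rfl, rfl, rfl, rfl, rfl⟩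
    refine ⟨shapeG'_mem_Sp6_iff.2 ⟨h1, h2, mul_inv_cancel₀ ha3.ne', ?_, ?_, ?_, ?_⟩,
      hasShapeG'_iff.2 ⟨_, _, _, _, _, _, _, _, _, _, _, _, _, _, _, _, _, _, _, rfl⟩, ha3⟩ <;>
      field_simp
  · rintro ⟨hS, hshape, hpos⟩
    obtain ⟨a1, b1, c1, d1, a2, b2, c2, d2, a3, l1, l2, l1', l2', m1, m2, m1', m2', k, f, rfl⟩ :=
      hasShapeG'_iff.1 hshape
    obtain ⟨h1, h2, hf, hl1, hm1, hl2, hm2⟩ := shapeG'_mem_Sp6_iff.1 hS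
    obtain rfl : f = a3⁻¹ := eq_inv_of_mul_eq_one_right hf
    have ha3 : 0 < a3 := hpos
    refine ⟨a1, b1, c1, d1, a2, b2, c2, d2, a3, l1, l2, l1', l2', m1, m2, m1', m2', k, ha3, h1, h2,
      by rw [← hl1]; field_simp, by rw [← hm1]; field_simp,
      by rw [← hl2]; field_simp, by rw [← hm2]; field_simp, rfl⟩

theorem G'_is_subgroup :
    memG' 1 ∧
    (∀ g h, memG' g → memG' h → memG' (g * h)) ∧
    (∀ g, memG' g → ∃ h, memG' h ∧ g * h = 1 ∧ h * g = 1) := by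
  simp only [memG'_iff]
  refine ⟨⟨one_mem _, ⟨blockTriangular_one, blockTriangular_one⟩, by simp⟩, ?_, ?_⟩
  · rintro g h ⟨hgS, hg, hg₂₂⟩ ⟨hhS, hh, hh₂₂⟩
    exact ⟨mul_mem hgS hhS, hg.mul hh, by rw [hg.mul_apply_two_two hh]; positivity⟩
  · rintro g ⟨hgS, hg, hg₂₂⟩
    have := invertibleOfIsUnitDet g (isUnit_det_of_mem_Sp6 hgS)
    have hinv₂₂ : g 2 2 * g⁻¹ 2 2 = 1 := by
      rw [← hg.mul_apply_two_two hg.inv, mul_inv_of_invertible, one_apply_eq]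
    refine ⟨g⁻¹, ⟨inv_mem_Sp6 hgS, hg.inv, ?_⟩, mul_inv_of_invertible g, inv_mul_of_invertible g⟩
    exact (pos_iff_pos_of_mul_pos (hinv₂₂ ▸ one_pos)).1 hg₂₂
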